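/- arXiv:2202.13466 — 4 statements merged into one kernel-verified Lean document; each statement's English description precedes it below -/
import Mathlib

section
/- Any non-constant solution φ of the cosmological equation is aperiodic: there do not exist t₁ ≠ t₂ in its domain with φ(t₁) = φ(t₂) and φ'(t₁) = φ'(t₂). -/
open scoped RealInnerProductSpace
open Set

/-- Any non-constant solution of the cosmological equation is aperiodic. -/
theorem statement1 (d : ℕ) (M₀ : ℝ) (hM₀ : 0 < M₀)
    (Φ : EuclideanSpace ℝ (Fin d) → ℝ) (hΦ : ContDiff ℝ (⊤ : ℕ∞) Φ) (hΦpos : ∀ x, 0 < Φ x)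
    (I : Set ℝ) (hI : IsOpen I) (hne : I.Nonempty) (hconn : I.OrdConnected)
    (φ φ' : ℝ → EuclideanSpace ℝ (Fin d))
    (hφ : ∀ t ∈ I, HasDerivAt φ (φ' t) t)
    (heq : ∀ t ∈ I, HasDerivAt φ'
      (-(((1 / M₀) * Real.sqrt (‖φ' t‖ ^ 2 + 2 * Φ (φ t))) • φ' t) - gradient Φ (φ t)) t)
    (hnc : ¬ ∀ t ∈ I, ∀ s ∈ I, φ t = φ s) :
    ¬ ∃ t₁ ∈ I, ∃ t₂ ∈ I, t₁ ≠ t₂ ∧ φ t₁ = φ t₂ ∧ φ' t₁ = φ' t₂ := by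
  rintro ⟨t₁, h₁, t₂, h₂, hne12, hpe, hve⟩
  -- positivity of the friction coefficient
  have hkpos : ∀ t, 0 < (1 / M₀) * Real.sqrt (‖φ' t‖ ^ 2 + 2 * Φ (φ t)) := by
    intro t
    have h2 : 0 < ‖φ' t‖ ^ 2 + 2 * Φ (φ t) := by
      have := hΦpos (φ t); positivity
    have := Real.sqrt_pos.2 h2
    positivity
  -- gradient as fderiv applied, and derivative of Φ ∘ φ
  have hΦdiff : Differentiable ℝ Φ := hΦ.differentiable (by simp)
  have hgradinner : ∀ x y, ⟪gradient Φ x, y⟫ = fderiv ℝ Φ x y := by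
    intro x y
    exact InnerProductSpace.toDual_symm_apply
  -- the main claim, for ordered times
  have key : ∀ a ∈ I, ∀ b ∈ I, a < b → φ a = φ b → φ' a = φ' b → False := by
    intro a ha b hb hab hpe hve
    have hIcc : Icc a b ⊆ I := hconn.out ha hb
    -- the energy
    set En : ℝ → ℝ := fun t => (1/2 : ℝ) * ⟪φ' t, φ' t⟫ + Φ (φ t) with hEn
    have hE' : ∀ t ∈ I, HasDerivAt En
        (-(((1 / M₀) * Real.sqrt (‖φ' t‖ ^ 2 + 2 * Φ (φ t))) * ⟪φ' t, φ' t⟫)) t := by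
      intro t ht
      have h1 := ((heq t ht).inner ℝ (heq t ht)).const_mul (1/2 : ℝ)
      have h2 : HasDerivAt (fun s => Φ (φ s)) (fderiv ℝ Φ (φ t) (φ' t)) t :=
        (hΦdiff (φ t)).hasFDerivAt.comp_hasDerivAt t (hφ t ht)
      have h3 := h1.add h2
      refine h3.congr_deriv ?_
      rw [← hgradinner]
      simp only [inner_sub_left, inner_sub_right, inner_neg_left, inner_neg_right,
        real_inner_smul_left, real_inner_smul_right, real_inner_comm (gradient Φ (φ t)) (φ' t)]
      ring
    -- energy is antitone on [a, b]
    have hanti : AntitoneOn En (Icc a b) := by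
      apply antitoneOn_of_deriv_nonpos (convex_Icc a b)
      · intro t ht
        exact (hE' t (hIcc ht)).continuousAt.continuousWithinAt
      · intro t ht
        rw [interior_Icc] at ht
        exact (hE' t (hIcc (Ioo_subset_Icc_self ht))).differentiableAt.differentiableWithinAt
      · intro t ht
        rw [interior_Icc] at ht
        rw [(hE' t (hIcc (Ioo_subset_Icc_self ht))).deriv]
        have h4 : (0:ℝ) ≤ ⟪φ' t, φ' t⟫ := real_inner_self_nonneg
        nlinarith [hkpos t]
    -- equal energies at the endpoints force the energy to be constant there
    have hEab : En a = En b := by simp [hEn, hpe, hve]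
    have hEconst : ∀ t ∈ Icc a b, En t = En a := by
      intro t ht
      have h1 : En t ≤ En a := hanti (left_mem_Icc.2 hab.le) ht ht.1
      have h2 : En b ≤ En t := hanti ht (right_mem_Icc.2 hab.le) ht.2
      linarith [hEab ▸ h2]
    -- hence the velocity vanishes in (a, b)
    have hz : ∀ t ∈ Ioo a b, φ' t = 0 := by
      intro t ht
      have hmem : Icc a b ∈ nhds t := Icc_mem_nhds ht.1 ht.2
      have hcongr : En =ᶠ[nhds t] fun _ => En a :=
        Filter.eventuallyEq_of_mem hmem hEconst
      have h0 : HasDerivAt En 0 t := (hasDerivAt_const t (En a)).congr_of_eventuallyEq hcongr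
      have := (hE' t (hIcc (Ioo_subset_Icc_self ht))).unique h0
      have hinner : ⟪φ' t, φ' t⟫ = 0 := by
        have h0 := neg_eq_zero.1 this
        exact (mul_eq_zero.1 h0).resolve_left (hkpos t).ne'
      rwa [real_inner_self_eq_norm_sq, pow_eq_zero_iff (two_ne_zero), norm_eq_zero] at hinner
    -- midpoint: velocity zero and gradient of Φ zero
    set m : ℝ := (a + b) / 2 with hm
    have hmI : m ∈ Ioo a b := ⟨by simp [hm]; linarith, by simp [hm]; linarith⟩
    have hmI' : m ∈ I := hIcc (Ioo_subset_Icc_self hmI)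
    have hv0 : φ' m = 0 := hz m hmI
    have hgrad0 : gradient Φ (φ m) = 0 := by
      have hnbhd : Ioo a b ∈ nhds m := Ioo_mem_nhds hmI.1 hmI.2
      have hcongr : φ' =ᶠ[nhds m] fun _ => 0 :=
        Filter.eventuallyEq_of_mem hnbhd hz
      have h0 : HasDerivAt φ' 0 m :=
        (hasDerivAt_const m (0 : EuclideanSpace ℝ (Fin d))).congr_of_eventuallyEq hcongr
      have := (heq m hmI').unique h0
      rw [hv0] at this
      simpa using this
    set c : EuclideanSpace ℝ (Fin d) := φ m with hc
    -- the first-order vector field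
    set v : (EuclideanSpace ℝ (Fin d)) × (EuclideanSpace ℝ (Fin d)) →
        (EuclideanSpace ℝ (Fin d)) × (EuclideanSpace ℝ (Fin d)) :=
      fun p => (p.2, -(((1 / M₀) * Real.sqrt (‖p.2‖ ^ 2 + 2 * Φ p.1)) • p.2) - gradient Φ p.1)
      with hv
    set f : ℝ → (EuclideanSpace ℝ (Fin d)) × (EuclideanSpace ℝ (Fin d)) :=
      fun t => (φ t, φ' t) with hf
    have hf' : ∀ t ∈ I, HasDerivAt f (v (f t)) t := fun t ht => (hφ t ht).prodMk (heq t ht)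
    have hvc : v (c, 0) = 0 := by
      simp [hv, hgrad0]
    -- v is C¹
    have hvsmooth : ContDiffAt ℝ 1 v (c, 0) := by
      have hgrad : ContDiff ℝ (⊤ : ℕ∞) (gradient Φ) := by
        have h1 : ContDiff ℝ (⊤ : ℕ∞) (fderiv ℝ Φ) := hΦ.fderiv_right (by simp)
        exact ((InnerProductSpace.toDual ℝ
          (EuclideanSpace ℝ (Fin d))).symm.toContinuousLinearEquiv.contDiff).comp h1
      have h2 : ContDiff ℝ (⊤ : ℕ∞) (fun p : (EuclideanSpace ℝ (Fin d)) × (EuclideanSpace ℝ (Fin d)) =>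
          Real.sqrt (‖p.2‖ ^ 2 + 2 * Φ p.1)) := by
        apply ContDiff.sqrt
        · exact ((contDiff_norm_sq ℝ).comp contDiff_snd).add
            ((contDiff_const.mul (hΦ.comp contDiff_fst)))
        · intro p
          have := hΦpos p.1
          positivity
      have : ContDiff ℝ (⊤ : ℕ∞) v := by
        apply ContDiff.prodMk contDiff_snd
        apply ContDiff.sub
        · exact ((contDiff_const.mul h2).smul contDiff_snd).neg
        · exact hgrad.comp contDiff_fst
      exact this.contDiffAt.of_le (by simp)
    -- the set where the trajectory coincides with the stationary point (c, 0)
    set S : Set ℝ := {t | t ∈ I ∧ f t = (c, 0)} with hS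
    have hSopen : IsOpen S := by
      rw [isOpen_iff_mem_nhds]
      rintro t₀ ⟨ht₀I, ht₀⟩
      obtain ⟨K, s, hs, hlip⟩ := hvsmooth.exists_lipschitzOnWith
      have hfc : ContinuousAt f t₀ := (hf' t₀ ht₀I).continuousAt
      have h1 : ∀ᶠ t in nhds t₀, HasDerivAt f (v (f t)) t ∧ f t ∈ s := by
        have hIe : ∀ᶠ t in nhds t₀, t ∈ I := hI.mem_nhds ht₀I
        have hse : ∀ᶠ t in nhds t₀, f t ∈ s := hfc (by rwa [ht₀])
        filter_upwards [hIe, hse] with t ha1 ha2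
        exact ⟨hf' t ha1, ha2⟩
      have h2 : ∀ᶠ t in nhds t₀,
          HasDerivAt (fun _ : ℝ => ((c, 0) : (EuclideanSpace ℝ (Fin d)) × (EuclideanSpace ℝ (Fin d))))
            (v (c, 0)) t ∧
            ((c, 0) : (EuclideanSpace ℝ (Fin d)) × (EuclideanSpace ℝ (Fin d))) ∈ s := by
        apply Filter.Eventually.of_forall
        intro t
        exact ⟨hvc ▸ hasDerivAt_const t _, mem_of_mem_nhds hs⟩
      have huniq := ODE_solution_unique_of_eventually (v := fun _ => v) (s := fun _ => s)
        (Filter.Eventually.of_forall (fun _ : ℝ => hlip)) h1 h2 ht₀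
      have : ∀ᶠ t in nhds t₀, t ∈ S := by
        filter_upwards [huniq, hI.mem_nhds ht₀I] with t ha1 ha2
        exact ⟨ha2, ha1⟩
      exact this
    have hclo : closure S ∩ I ⊆ S := by
      rintro t ⟨htc, htI⟩
      refine ⟨htI, ?_⟩
      have hfc : ContinuousAt f t := (hf' t htI).continuousAt
      have h1 := hfc.continuousWithinAt.mem_closure_image htc
      have himg : f '' S ⊆ {((c, 0) : (EuclideanSpace ℝ (Fin d)) × (EuclideanSpace ℝ (Fin d)))} := by
        rintro _ ⟨x, hx, rfl⟩; exact hx.2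
      have h2 := closure_mono himg h1
      rwa [isClosed_singleton.closure_eq, mem_singleton_iff] at h2
    have hsub : I ⊆ S :=
      hconn.isPreconnected.subset_of_closure_inter_subset hSopen
        ⟨m, hmI', ⟨hmI', by simp [hf, hc, hv0]⟩⟩ hclo
    apply hnc
    intro t ht s hs
    have e1 : φ t = c := congrArg Prod.fst (hsub ht).2
    have e2 : φ s = c := congrArg Prod.fst (hsub hs).2
    rw [e1, e2]
  rcases hne12.lt_or_gt with h | h
  · exact key t₁ h₁ t₂ h₂ h hpe hve
  · exact key t₂ h₂ t₁ h₁ h hpe.symm hve.symm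
end

section
/- Every maximal solution of the equation φ'' + (1/M₀)·‖φ'‖·φ' = 0 in ℝ^d with initial condition φ(0) = p, φ'(0) = u ≠ 0 is given by φ(t) = p + M₀·log(1 + ‖u‖t/M₀)·(u/‖u‖), defined on (-M₀/‖u‖, ∞); in particular its speed is ‖φ'(t)‖ = M₀‖u‖/(M₀ + t‖u‖). -/
/-!
The velocity `φ'` solves the autonomous equation `v' = -(‖v‖/M₀) v`, whose right-hand side is
Lipschitz on bounded sets, so it agrees with the explicit solution `(M₀ / (M₀ + t‖u‖)) • u` for as
long as the latter exists. The speed of the explicit solution blows up as `t ↓ -M₀/‖u‖`, which a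
velocity continuous on `J` cannot do, so `J` stays to the right of that time; integrating the
velocity then gives the position.
-/

open Set Filter Topology Metric Bornology

theorem neg_div_lt_iff_pos_add_mul {a b t : ℝ} (hb : 0 < b) : -(a / b) < t ↔ 0 < a + t * b := by
  rw [← neg_div, div_lt_iff₀ hb]; constructor <;> intro h <;> linarith

section

variable {E : Type*} [NormedAddCommGroup E] [NormedSpace ℝ E]

theorem lipschitzOnWith_norm_smul_self (R : NNReal) :
    LipschitzOnWith (2 * R) (fun x : E => ‖x‖ • x) (closedBall 0 R) := by
  refine LipschitzOnWith.of_dist_le_mul fun x hx y hy => ?_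
  rw [mem_closedBall_zero_iff] at hx hy
  have hsplit : ‖x‖ • x - ‖y‖ • y = ‖x‖ • (x - y) + (‖x‖ - ‖y‖) • y := by
    rw [smul_sub, sub_smul]; abel
  rw [dist_eq_norm, dist_eq_norm, hsplit]
  calc ‖‖x‖ • (x - y) + (‖x‖ - ‖y‖) • y‖
      ≤ ‖x‖ * ‖x - y‖ + |‖x‖ - ‖y‖| * ‖y‖ := by
        grw [norm_add_le, norm_smul, norm_smul, Real.norm_eq_abs, Real.norm_eq_abs, abs_norm]
    _ ≤ R * ‖x - y‖ + ‖x - y‖ * R := by gcongr; exact abs_norm_sub_norm_le x y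
    _ = ↑(2 * R) * ‖x - y‖ := by push_cast; ring

theorem exists_lipschitzOnWith_norm_smul_self {s : Set E} (hs : IsBounded s) :
    ∃ K, LipschitzOnWith K (fun x : E => ‖x‖ • x) s := by
  obtain ⟨r, hr⟩ := hs.subset_closedBall 0
  exact ⟨_, (lipschitzOnWith_norm_smul_self r.toNNReal).mono
    (hr.trans (closedBall_subset_closedBall (Real.le_coe_toNNReal r)))⟩

theorem eqOn_Icc_of_hasDerivAt_of_lipschitzOnWith_isBounded {f : E → E}
    (hf : ∀ s, IsBounded s → ∃ K, LipschitzOnWith K f s) {γ₁ γ₂ : ℝ → E} {a b t₀ : ℝ}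
    (ht₀ : t₀ ∈ Icc a b) (h₁ : ∀ t ∈ Icc a b, HasDerivAt γ₁ (f (γ₁ t)) t)
    (h₂ : ∀ t ∈ Icc a b, HasDerivAt γ₂ (f (γ₂ t)) t) (heq : γ₁ t₀ = γ₂ t₀) :
    EqOn γ₁ γ₂ (Icc a b) := by
  have hc₁ := HasDerivAt.continuousOn h₁
  have hc₂ := HasDerivAt.continuousOn h₂
  set S := γ₁ '' Icc a b ∪ γ₂ '' Icc a b
  obtain ⟨K, hK⟩ := hf S ((isCompact_Icc.image_of_continuousOn hc₁).union
    (isCompact_Icc.image_of_continuousOn hc₂)).isBounded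
  have hS₁ : ∀ t ∈ Icc a b, γ₁ t ∈ S := fun t ht => Or.inl (mem_image_of_mem γ₁ ht)
  have hS₂ : ∀ t ∈ Icc a b, γ₂ t ∈ S := fun t ht => Or.inr (mem_image_of_mem γ₂ ht)
  have hleft : Icc a t₀ ⊆ Icc a b := Icc_subset_Icc_right ht₀.2
  have hright : Icc t₀ b ⊆ Icc a b := Icc_subset_Icc_left ht₀.1
  have hl : Ioc a t₀ ⊆ Icc a b := Ioc_subset_Icc_self.trans hleft
  have hr : Ico t₀ b ⊆ Icc a b := Ico_subset_Icc_self.trans hright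
  rw [← Icc_union_Icc_eq_Icc ht₀.1 ht₀.2]
  refine EqOn.union ?_ ?_
  · exact ODE_solution_unique_of_mem_Icc_left (v := fun _ => f) (s := fun _ => S)
      (fun _ _ => hK) (hc₁.mono hleft) (fun t ht => (h₁ t (hl ht)).hasDerivWithinAt)
      (fun t ht => hS₁ t (hl ht)) (hc₂.mono hleft) (fun t ht => (h₂ t (hl ht)).hasDerivWithinAt)
      (fun t ht => hS₂ t (hl ht)) heq
  · exact ODE_solution_unique_of_mem_Icc_right (v := fun _ => f) (s := fun _ => S)
      (fun _ _ => hK) (hc₁.mono hright) (fun t ht => (h₁ t (hr ht)).hasDerivWithinAt)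
      (fun t ht => hS₁ t (hr ht)) (hc₂.mono hright) (fun t ht => (h₂ t (hr ht)).hasDerivWithinAt)
      (fun t ht => hS₂ t (hr ht)) heq

theorem Set.OrdConnected.eqOn_of_hasDerivAt_of_lipschitzOnWith_isBounded {f : E → E}
    (hf : ∀ s, IsBounded s → ∃ K, LipschitzOnWith K f s) {I : Set ℝ} (hI : I.OrdConnected)
    {γ₁ γ₂ : ℝ → E} {t₀ : ℝ} (ht₀ : t₀ ∈ I) (h₁ : ∀ t ∈ I, HasDerivAt γ₁ (f (γ₁ t)) t)
    (h₂ : ∀ t ∈ I, HasDerivAt γ₂ (f (γ₂ t)) t) (heq : γ₁ t₀ = γ₂ t₀) :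
    EqOn γ₁ γ₂ I := fun t ht =>
  have hsub : uIcc t₀ t ⊆ I := hI.uIcc_subset ht₀ ht
  eqOn_Icc_of_hasDerivAt_of_lipschitzOnWith_isBounded hf left_mem_uIcc
    (fun s hs => h₁ s (hsub hs)) (fun s hs => h₂ s (hsub hs)) heq right_mem_uIcc

variable {M₀ t : ℝ} {u : E}

noncomputable def uvField (M₀ : ℝ) (x : E) : E := -((1 / M₀ * ‖x‖) • x)

theorem exists_lipschitzOnWith_uvField {s : Set E} (hs : IsBounded s) :
    ∃ K, LipschitzOnWith K (uvField M₀) s := by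
  obtain ⟨K, hK⟩ := exists_lipschitzOnWith_norm_smul_self hs
  have hfield : uvField M₀ = (fun x => -(1 / M₀) • x) ∘ fun x : E => ‖x‖ • x := by
    funext x; simp [uvField, smul_smul]
  exact hfield ▸ ⟨_, (lipschitzWith_smul _).comp_lipschitzOnWith hK⟩

noncomputable def uvVelocity (M₀ : ℝ) (u : E) (t : ℝ) : E := (M₀ / (M₀ + t * ‖u‖)) • u

theorem uvVelocity_zero (hM₀ : M₀ ≠ 0) : uvVelocity M₀ u 0 = u := by
  simp [uvVelocity, hM₀]

theorem norm_uvVelocity (hM₀ : 0 < M₀) (ht : 0 < M₀ + t * ‖u‖) :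
    ‖uvVelocity M₀ u t‖ = M₀ * ‖u‖ / (M₀ + t * ‖u‖) := by
  rw [uvVelocity, norm_smul, Real.norm_of_nonneg (by positivity), div_mul_eq_mul_div]

theorem hasDerivAt_uvVelocity (hM₀ : 0 < M₀) (ht : 0 < M₀ + t * ‖u‖) :
    HasDerivAt (uvVelocity M₀ u) (uvField M₀ (uvVelocity M₀ u t)) t := by
  have hden : HasDerivAt (fun s : ℝ => M₀ + s * ‖u‖) ‖u‖ t := by
    simpa using ((hasDerivAt_id t).mul_const ‖u‖).const_add M₀
  refine (((hasDerivAt_const t M₀).div hden ht.ne').smul_const u).congr_deriv ?_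
  rw [uvField, norm_uvVelocity hM₀ ht, uvVelocity, smul_smul, ← neg_smul]
  congr 1
  field_simp
  ring

noncomputable def uvPosition (M₀ : ℝ) (p u : E) (t : ℝ) : E :=
  p + (M₀ * Real.log (1 + ‖u‖ * t / M₀)) • (‖u‖⁻¹ • u)

theorem hasDerivAt_uvPosition (p : E) (hM₀ : 0 < M₀) (hu : u ≠ 0) (ht : 0 < M₀ + t * ‖u‖) :
    HasDerivAt (uvPosition M₀ p u) (uvVelocity M₀ u t) t := by
  have harg : 1 + ‖u‖ * t / M₀ = (M₀ + t * ‖u‖) / M₀ := by field_simp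
  have hinner : HasDerivAt (fun s : ℝ => 1 + ‖u‖ * s / M₀) (‖u‖ / M₀) t := by
    simpa using (((hasDerivAt_id t).const_mul ‖u‖).div_const M₀).const_add 1
  have hlog := hinner.log (by rw [harg]; positivity)
  refine (((hlog.const_mul M₀).smul_const (‖u‖⁻¹ • u)).const_add p).congr_deriv ?_
  rw [uvVelocity, smul_smul, harg]
  congr 1
  field_simp

theorem uvPosition_zero (p : E) : uvPosition M₀ p u 0 = p := by
  simp [uvPosition]

theorem tendsto_norm_uvVelocity_nhdsGT (hM₀ : 0 < M₀) (hu : u ≠ 0) :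
    Tendsto (fun t => ‖uvVelocity M₀ u t‖) (𝓝[>] (-(M₀ / ‖u‖))) atTop := by
  have hnu : 0 < ‖u‖ := norm_pos_iff.mpr hu
  have hden : Tendsto (fun t => M₀ + t * ‖u‖) (𝓝[>] (-(M₀ / ‖u‖))) (𝓝[>] 0) := by
    refine tendsto_nhdsWithin_of_tendsto_nhds_of_eventually_within _ ?_ ?_
    · refine ((by fun_prop : Continuous fun t : ℝ => M₀ + t * ‖u‖).tendsto' _ 0 ?_).mono_left
        nhdsWithin_le_nhds
      field_simp; ring
    · filter_upwards [self_mem_nhdsWithin] with t ht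
      exact (neg_div_lt_iff_pos_add_mul hnu).mp ht
  refine ((tendsto_inv_nhdsGT_zero.comp hden).const_mul_atTop
    (by positivity : 0 < M₀ * ‖u‖)).congr' ?_
  filter_upwards [self_mem_nhdsWithin] with t ht
  rw [norm_uvVelocity hM₀ ((neg_div_lt_iff_pos_add_mul hnu).mp ht)]
  rfl

variable {φ φ' : ℝ → E} {J : Set ℝ}

theorem Set.OrdConnected.eqOn_uvVelocity (hconn : J.OrdConnected) (h0 : 0 ∈ J) (hM₀ : 0 < M₀)
    (hu : u ≠ 0) (heq : ∀ t ∈ J, HasDerivAt φ' (uvField M₀ (φ' t)) t) (hu0 : φ' 0 = u) :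
    EqOn φ' (uvVelocity M₀ u) (J ∩ Ioi (-(M₀ / ‖u‖))) := by
  have hnu : 0 < ‖u‖ := norm_pos_iff.mpr hu
  have hc0 : -(M₀ / ‖u‖) < 0 := neg_neg_of_pos (by positivity)
  exact (hconn.inter ordConnected_Ioi).eqOn_of_hasDerivAt_of_lipschitzOnWith_isBounded
    (fun _ => exists_lipschitzOnWith_uvField) ⟨h0, hc0⟩ (fun t ht => heq t ht.1)
    (fun t ht => hasDerivAt_uvVelocity hM₀ ((neg_div_lt_iff_pos_add_mul hnu).mp ht.2))
    (by rw [hu0, uvVelocity_zero hM₀.ne'])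

theorem Set.OrdConnected.subset_Ioi_of_hasDerivAt_uvField (hconn : J.OrdConnected) (h0 : 0 ∈ J)
    (hM₀ : 0 < M₀) (hu : u ≠ 0) (heq : ∀ t ∈ J, HasDerivAt φ' (uvField M₀ (φ' t)) t)
    (hu0 : φ' 0 = u) : J ⊆ Ioi (-(M₀ / ‖u‖)) := by
  set c := -(M₀ / ‖u‖)
  have hc0 : c < 0 := neg_neg_of_pos (by positivity)
  intro t ht
  by_contra htc
  rw [mem_Ioi, not_lt] at htc
  have hcJ : c ∈ J := hconn.out ht h0 ⟨htc, hc0.le⟩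
  have hcont : Tendsto (‖φ' ·‖) (𝓝[>] c) (𝓝 ‖φ' c‖) :=
    (heq c hcJ).continuousAt.norm.mono_left nhdsWithin_le_nhds
  have hagree : (‖uvVelocity M₀ u ·‖) =ᶠ[𝓝[>] c] (‖φ' ·‖) := by
    filter_upwards [Ioo_mem_nhdsGT hc0] with s hs
    rw [hconn.eqOn_uvVelocity h0 hM₀ hu heq hu0 ⟨hconn.out hcJ h0 (Ioo_subset_Icc_self hs), hs.1⟩]
  exact not_tendsto_nhds_of_tendsto_atTop
    ((tendsto_norm_uvVelocity_nhdsGT hM₀ hu).congr' hagree) _ hcont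

end

/-- Every maximal solution of the UV equation `φ'' + (1/M₀)‖φ'‖ φ' = 0` with `φ(0) = p`,
`φ'(0) = u ≠ 0` is given by `φ(t) = p + M₀ log(1 + ‖u‖t/M₀) • (u/‖u‖)` on
`(-M₀/‖u‖, ∞)`; in particular its speed is `‖φ'(t)‖ = M₀‖u‖/(M₀ + t‖u‖)`. -/
theorem statement12 (d : ℕ) (M₀ : ℝ) (hM₀ : 0 < M₀)
    (p u : EuclideanSpace ℝ (Fin d)) (hu : u ≠ 0)
    (J : Set ℝ) (hJ : IsOpen J) (hconn : J.OrdConnected) (h0 : (0 : ℝ) ∈ J)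
    (φ φ' : ℝ → EuclideanSpace ℝ (Fin d))
    (hφ : ∀ t ∈ J, HasDerivAt φ (φ' t) t)
    (heq : ∀ t ∈ J, HasDerivAt φ' (-(((1 / M₀) * ‖φ' t‖) • φ' t)) t)
    (hp : φ 0 = p) (hu0 : φ' 0 = u) :
    J ⊆ Set.Ioi (-(M₀ / ‖u‖)) ∧
    ∀ t ∈ J, φ t = p + (M₀ * Real.log (1 + ‖u‖ * t / M₀)) • (‖u‖⁻¹ • u) ∧
      ‖φ' t‖ = M₀ * ‖u‖ / (M₀ + t * ‖u‖) := by
  have hJsub := hconn.subset_Ioi_of_hasDerivAt_uvField h0 hM₀ hu heq hu0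
  have hvel := hconn.eqOn_uvVelocity h0 hM₀ hu heq hu0
  have hpos : ∀ t ∈ J, 0 < M₀ + t * ‖u‖ := fun t ht =>
    (neg_div_lt_iff_pos_add_mul (norm_pos_iff.mpr hu)).mp (hJsub ht)
  have hψ : ∀ t ∈ J, HasDerivAt (uvPosition M₀ p u) (uvVelocity M₀ u t) t :=
    fun t ht => hasDerivAt_uvPosition p hM₀ hu (hpos t ht)
  have hposition : EqOn φ (uvPosition M₀ p u) J :=
    hJ.eqOn_of_deriv_eq hconn.isPreconnected
      (fun t ht => (hφ t ht).differentiableAt.differentiableWithinAt)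
      (fun t ht => (hψ t ht).differentiableAt.differentiableWithinAt)
      (fun t ht => by rw [(hφ t ht).deriv, (hψ t ht).deriv, hvel ⟨ht, hJsub ht⟩])
      h0 (by rw [hp, uvPosition_zero])
  refine ⟨hJsub, fun t ht => ⟨hposition ht, ?_⟩⟩
  rw [hvel ⟨ht, hJsub ht⟩, norm_uvVelocity hM₀ (hpos t ht)]
end

section
/- For any solution φ of φ'' + (1/M₀)·‖φ'‖·φ' = 0 with φ'(0) ≠ 0, the direction of the velocity is constant: φ'(t)/‖φ'(t)‖ = φ'(0)/‖φ'(0)‖ for all t in the domain (on which φ' never vanishes). -/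
open scoped RealInnerProductSpace

/-- For any solution of the UV equation `φ'' + (1/M₀)‖φ'‖ φ' = 0` with nowhere-vanishing
velocity, the direction of the velocity is constant. -/
theorem statement13 (d : ℕ) (M₀ : ℝ) (hM₀ : 0 < M₀)
    (I : Set ℝ) (hI : IsOpen I) (hconn : I.OrdConnected) (h0 : (0 : ℝ) ∈ I)
    (φ φ' : ℝ → EuclideanSpace ℝ (Fin d))
    (hφ : ∀ t ∈ I, HasDerivAt φ (φ' t) t)
    (heq : ∀ t ∈ I, HasDerivAt φ' (-(((1 / M₀) * ‖φ' t‖) • φ' t)) t)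
    (hne : ∀ t ∈ I, φ' t ≠ 0) :
    ∀ t ∈ I, ‖φ' t‖⁻¹ • φ' t = ‖φ' 0‖⁻¹ • φ' 0 := by
  set u : ℝ → EuclideanSpace ℝ (Fin d) := fun t => ‖φ' t‖⁻¹ • φ' t with hu
  have key : ∀ t ∈ I, HasDerivAt u 0 t := by
    intro t ht
    set v := φ' t with hv
    have hvne : v ≠ 0 := hne t ht
    have hn : (0:ℝ) < ‖v‖ := norm_pos_iff.2 hvne
    set c : ℝ := (1 / M₀) * ‖v‖ with hc
    -- derivative of the squared norm
    have hinner : HasDerivAt (fun s => ⟪φ' s, φ' s⟫)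
        (⟪v, -(c • v)⟫ + ⟪-(c • v), v⟫) t := (heq t ht).inner ℝ (heq t ht)
    have hinner_ne : ⟪v, v⟫ ≠ 0 := by
      rw [real_inner_self_eq_norm_sq]; positivity
    have hsqrt : HasDerivAt (fun s => Real.sqrt ⟪φ' s, φ' s⟫)
        ((⟪v, -(c • v)⟫ + ⟪-(c • v), v⟫) / (2 * Real.sqrt ⟪v, v⟫)) t := by
      simpa [div_eq_inv_mul, mul_comm] using hinner.sqrt hinner_ne
    have hfun : (fun s => Real.sqrt ⟪φ' s, φ' s⟫) = fun s => ‖φ' s‖ := by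
      funext s
      rw [real_inner_self_eq_norm_sq, Real.sqrt_sq (norm_nonneg _)]
    have hsqv : Real.sqrt ⟪v, v⟫ = ‖v‖ := by
      rw [real_inner_self_eq_norm_sq, Real.sqrt_sq (norm_nonneg _)]
    rw [hfun] at hsqrt
    -- the derivative of the norm equals -c‖v‖
    have hval : (⟪v, -(c • v)⟫ + ⟪-(c • v), v⟫) / (2 * Real.sqrt ⟪v, v⟫) = -(c * ‖v‖) := by
      rw [hsqv, inner_neg_right, inner_neg_left, real_inner_smul_right, real_inner_smul_left,
        real_inner_self_eq_norm_sq]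
      field_simp
      ring
    rw [hval] at hsqrt
    have hnorm : HasDerivAt (fun s => ‖φ' s‖) (-(c * ‖v‖)) t := hsqrt
    have hinv : HasDerivAt (fun s => ‖φ' s‖⁻¹) (-(-(c * ‖v‖)) / (‖v‖ ^ 2)) t :=
      hnorm.inv hn.ne'
    have := hinv.smul (heq t ht)
    simp only [← hv] at this
    have hzero : ‖v‖⁻¹ • -((1 / M₀ * ‖v‖) • v) + (- -(c * ‖v‖) / ‖v‖ ^ 2) • v = 0 := by
      rw [smul_neg, smul_smul, neg_neg, ← neg_smul, ← add_smul]
      convert zero_smul ℝ v using 2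
      rw [hc]
      field_simp
      ring
    exact hzero ▸ this
  -- constancy on the convex set I
  have hconv : Convex ℝ I := hconn.convex
  have hdiff : DifferentiableOn ℝ u I := fun t ht =>
    ((key t ht).differentiableAt).differentiableWithinAt
  have hfd : ∀ t ∈ I, fderivWithin ℝ u I t = 0 := by
    intro t ht
    rw [fderivWithin_of_isOpen hI ht, (key t ht).hasFDerivAt.fderiv]
    ext x
    simp
  intro t ht
  exact hconv.is_const_of_fderivWithin_eq_zero hdiff hfd ht h0
end

section
/- If φ : (a₋,a₊) → M is a maximal solution of the cosmological equation on a compact Riemannian manifold (M, G) with smooth positive potential Φ, and m is an ω-limit point of φ (i.e. m = lim φ(t_n) for some t_n → a₊), then m is a critical point of Φ, i.e. dΦ(m) = 0. -/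
open scoped RealInnerProductSpace
open Set Filter

set_option maxHeartbeats 1000000 in
/-- ω-limit points of a (future-complete, maximal) solution of the cosmological equation
whose orbit stays in a compact set (modelling a compact scalar manifold) are critical
points of the potential `Φ`. -/
theorem statement14 (d : ℕ) (M₀ : ℝ) (hM₀ : 0 < M₀)
    (Φ : EuclideanSpace ℝ (Fin d) → ℝ) (hΦ : ContDiff ℝ (⊤ : ℕ∞) Φ) (hΦpos : ∀ x, 0 < Φ x)
    (K : Set (EuclideanSpace ℝ (Fin d))) (hK : IsCompact K)
    (a : ℝ) (φ φ' : ℝ → EuclideanSpace ℝ (Fin d))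
    (hmem : ∀ t ∈ Set.Ioi a, φ t ∈ K)
    (hφ : ∀ t ∈ Set.Ioi a, HasDerivAt φ (φ' t) t)
    (heq : ∀ t ∈ Set.Ioi a, HasDerivAt φ'
      (-(((1 / M₀) * Real.sqrt (‖φ' t‖ ^ 2 + 2 * Φ (φ t))) • φ' t) - gradient Φ (φ t)) t)
    (m : EuclideanSpace ℝ (Fin d)) (tn : ℕ → ℝ)
    (htn : ∀ n, tn n ∈ Set.Ioi a)
    (htop : Filter.Tendsto tn Filter.atTop Filter.atTop)
    (hconv : Filter.Tendsto (fun n => φ (tn n)) Filter.atTop (nhds m)) :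
    gradient Φ m = 0 := by
  have hΦd : Differentiable ℝ Φ := hΦ.differentiable (by simp)
  have gradcont : Continuous (gradient Φ) := by
    have : gradient Φ = fun x => (InnerProductSpace.toDual ℝ _).symm (fderiv ℝ Φ x) := rfl
    rw [this]
    exact (InnerProductSpace.toDual ℝ _).symm.continuous.comp (hΦ.continuous_fderiv (by simp))
  -- the friction coefficient and the acceleration
  set co : ℝ → ℝ := fun t => (1 / M₀) * Real.sqrt (‖φ' t‖ ^ 2 + 2 * Φ (φ t)) with hco_def
  set ψ : ℝ → EuclideanSpace ℝ (Fin d) :=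
    fun t => -(co t • φ' t) - gradient Φ (φ t) with hψ_def
  have heq' : ∀ t ∈ Set.Ioi a, HasDerivAt φ' (ψ t) t := heq
  have hco_nonneg : ∀ t, 0 ≤ co t := fun t =>
    mul_nonneg (by positivity) (Real.sqrt_nonneg _)
  -- chain rule for Φ ∘ φ
  have hchain : ∀ t ∈ Set.Ioi a,
      HasDerivAt (fun s => Φ (φ s)) ⟪gradient Φ (φ t), φ' t⟫ t := by
    intro t ht
    have h1 : HasGradientAt Φ (gradient Φ (φ t)) (φ t) := (hΦd (φ t)).hasGradientAt
    exact h1.hasFDerivAt.comp_hasDerivAt t (hφ t ht)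
  -- energy
  set E : ℝ → ℝ := fun t => ⟪φ' t, φ' t⟫ / 2 + Φ (φ t) with hE_def
  have hnorm_sq : ∀ t, ⟪φ' t, φ' t⟫ = ‖φ' t‖ ^ 2 := fun t =>
    real_inner_self_eq_norm_sq (φ' t)
  have hE_pos : ∀ t, 0 < E t := fun t =>
    add_pos_of_nonneg_of_pos (by rw [hnorm_sq]; positivity) (hΦpos _)
  have hE' : ∀ t ∈ Set.Ioi a, HasDerivAt E (-(co t * ⟪φ' t, φ' t⟫)) t := by
    intro t ht
    have h1 : HasDerivAt (fun s => ⟪φ' s, φ' s⟫) (⟪φ' t, ψ t⟫ + ⟪ψ t, φ' t⟫) t :=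
      (heq' t ht).inner ℝ (heq' t ht)
    have h2 := (h1.div_const 2).add (hchain t ht)
    have key : (⟪φ' t, ψ t⟫ + ⟪ψ t, φ' t⟫) / 2 + ⟪gradient Φ (φ t), φ' t⟫
        = -(co t * ⟪φ' t, φ' t⟫) := by
      have : ⟪φ' t, ψ t⟫ = ⟪ψ t, φ' t⟫ := real_inner_comm _ _
      rw [this, hψ_def]
      simp only [inner_sub_left, inner_neg_left, real_inner_smul_left]
      ring
    rwa [key] at h2
  -- membership / compactness constants
  have hmK : m ∈ K :=
    hK.isClosed.mem_of_tendsto hconv (Filter.Eventually.of_forall fun n => hmem _ (htn n))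
  have hKne : K.Nonempty := ⟨m, hmK⟩
  obtain ⟨c, hc_pos, hc_le⟩ : ∃ c, 0 < c ∧ ∀ x ∈ K, c ≤ Φ x := by
    obtain ⟨x₀, hx₀K, hx₀⟩ := hK.exists_isMinOn hKne hΦd.continuous.continuousOn
    exact ⟨Φ x₀, hΦpos x₀, fun x hx => hx₀ hx⟩
  obtain ⟨Pmax, hP_le⟩ : ∃ P, ∀ x ∈ K, Φ x ≤ P := by
    obtain ⟨x₁, hx₁K, hx₁⟩ := hK.exists_isMaxOn hKne hΦd.continuous.continuousOn
    exact ⟨Φ x₁, fun x hx => hx₁ hx⟩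
  obtain ⟨Gmax, hG_nonneg, hG_le⟩ : ∃ G, 0 ≤ G ∧ ∀ x ∈ K, ‖gradient Φ x‖ ≤ G := by
    obtain ⟨x₂, hx₂K, hx₂⟩ := hK.exists_isMaxOn hKne gradcont.norm.continuousOn
    exact ⟨‖gradient Φ x₂‖, norm_nonneg _, fun x hx => hx₂ hx⟩
  -- the reference time
  set T₀ : ℝ := tn 0 with hT₀_def
  have hT₀ : a < T₀ := htn 0
  have hIci : Set.Ici T₀ ⊆ Set.Ioi a := fun t ht => lt_of_lt_of_le hT₀ ht
  -- E is antitone on [T₀, ∞)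
  have hEanti : AntitoneOn E (Set.Ici T₀) := by
    apply antitoneOn_of_deriv_nonpos (convex_Ici T₀)
    · exact fun t ht => ((hE' t (hIci ht)).continuousAt).continuousWithinAt
    · intro t ht
      rw [interior_Ici] at ht
      exact (hE' t (hIci (show T₀ ≤ t from le_of_lt ht))).differentiableAt.differentiableWithinAt
    · intro t ht
      rw [interior_Ici] at ht
      rw [(hE' t (hIci (show T₀ ≤ t from le_of_lt ht))).deriv]
      have := hnorm_sq t
      nlinarith [hco_nonneg t, sq_nonneg ‖φ' t‖]
  -- velocity bound
  obtain ⟨C, hC_pos, hvel⟩ : ∃ C, 0 < C ∧ ∀ t ∈ Set.Ici T₀, ‖φ' t‖ ≤ C := by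
    refine ⟨Real.sqrt (2 * E T₀), Real.sqrt_pos.mpr (by linarith [hE_pos T₀]), ?_⟩
    intro t ht
    rw [show ‖φ' t‖ = Real.sqrt (‖φ' t‖ ^ 2) by rw [Real.sqrt_sq (norm_nonneg _)]]
    apply Real.sqrt_le_sqrt
    have h1 : E t ≤ E T₀ := hEanti (Set.mem_Ici.mpr le_rfl) ht ht
    have h2 := hΦpos (φ t)
    have h0 : ‖φ' t‖ ^ 2 = 2 * E t - 2 * Φ (φ t) := by
      have := hnorm_sq t
      simp only [hE_def]; linarith
    linarith
  -- friction coefficient bounds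
  obtain ⟨Cf, hCf_nonneg, hco_le⟩ : ∃ Cf, 0 ≤ Cf ∧ ∀ t ∈ Set.Ici T₀, co t ≤ Cf := by
    refine ⟨(1 / M₀) * Real.sqrt (C ^ 2 + 2 * Pmax), by positivity, ?_⟩
    intro t ht
    rw [hco_def]
    apply mul_le_mul_of_nonneg_left _ (by positivity : (0:ℝ) ≤ 1 / M₀)
    apply Real.sqrt_le_sqrt
    have h1 : ‖φ' t‖ ^ 2 ≤ C ^ 2 := by nlinarith [hvel t ht, norm_nonneg (φ' t)]
    have h2 := hP_le _ (hmem t (hIci ht))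
    linarith
  obtain ⟨cmin, hcmin_pos, hco_ge⟩ : ∃ cm, 0 < cm ∧ ∀ t ∈ Set.Ioi a, cm ≤ co t := by
    refine ⟨(1 / M₀) * Real.sqrt (2 * c),
      mul_pos (by positivity) (Real.sqrt_pos.mpr (by linarith)), ?_⟩
    intro t ht
    rw [hco_def]
    apply mul_le_mul_of_nonneg_left _ (by positivity : (0:ℝ) ≤ 1 / M₀)
    apply Real.sqrt_le_sqrt
    have := hc_le _ (hmem t ht)
    nlinarith [sq_nonneg ‖φ' t‖]
  -- acceleration bound
  obtain ⟨B, hB_pos, hψ_le⟩ : ∃ B, 0 < B ∧ ∀ t ∈ Set.Ici T₀, ‖ψ t‖ ≤ B := by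
    refine ⟨Cf * C + Gmax + 1, by positivity, ?_⟩
    intro t ht
    have h1 : ‖ψ t‖ ≤ ‖co t • φ' t‖ + ‖gradient Φ (φ t)‖ := by
      rw [hψ_def]
      calc ‖-(co t • φ' t) - gradient Φ (φ t)‖
          ≤ ‖-(co t • φ' t)‖ + ‖gradient Φ (φ t)‖ := norm_sub_le _ _
        _ = ‖co t • φ' t‖ + ‖gradient Φ (φ t)‖ := by rw [norm_neg]
    have h2 : ‖co t • φ' t‖ ≤ Cf * C := by
      rw [norm_smul, Real.norm_eq_abs, abs_of_nonneg (hco_nonneg t)]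
      exact mul_le_mul (hco_le t ht) (hvel t ht) (norm_nonneg _) hCf_nonneg
    have h3 := hG_le _ (hmem t (hIci ht))
    linarith
  -- kinetic energy h and its Lipschitz bound
  set h : ℝ → ℝ := fun t => ‖φ' t‖ ^ 2 with hh_def
  have hh_nonneg : ∀ t, 0 ≤ h t := fun t => sq_nonneg _
  have hh' : ∀ t ∈ Set.Ioi a, HasDerivAt h (⟪φ' t, ψ t⟫ + ⟪ψ t, φ' t⟫) t := by
    intro t ht
    have h1 : HasDerivAt (fun s => ⟪φ' s, φ' s⟫) (⟪φ' t, ψ t⟫ + ⟪ψ t, φ' t⟫) t :=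
      (heq' t ht).inner ℝ (heq' t ht)
    have : h = fun s => ⟪φ' s, φ' s⟫ := funext fun s => (hnorm_sq s).symm
    rw [this]
    exact h1
  obtain ⟨L, hL_pos, hh'_le⟩ : ∃ L, 0 < L ∧
      ∀ t ∈ Set.Ici T₀, ‖⟪φ' t, ψ t⟫ + ⟪ψ t, φ' t⟫‖ ≤ L := by
    refine ⟨2 * B * C + 1, by positivity, ?_⟩
    intro t ht
    have h1 : ‖⟪φ' t, ψ t⟫‖ ≤ C * B := by
      calc ‖⟪φ' t, ψ t⟫‖ ≤ ‖φ' t‖ * ‖ψ t‖ := norm_inner_le_norm _ _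
        _ ≤ C * B := mul_le_mul (hvel t ht) (hψ_le t ht) (norm_nonneg _) hC_pos.le
    have h2 : ‖⟪ψ t, φ' t⟫‖ ≤ B * C := by
      calc ‖⟪ψ t, φ' t⟫‖ ≤ ‖ψ t‖ * ‖φ' t‖ := norm_inner_le_norm _ _
        _ ≤ B * C := mul_le_mul (hψ_le t ht) (hvel t ht) (norm_nonneg _) hB_pos.le
    calc ‖⟪φ' t, ψ t⟫ + ⟪ψ t, φ' t⟫‖ ≤ ‖⟪φ' t, ψ t⟫‖ + ‖⟪ψ t, φ' t⟫‖ := norm_add_le _ _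
      _ ≤ C * B + B * C := add_le_add h1 h2
      _ ≤ 2 * B * C + 1 := by nlinarith
  -- energy drop lemma
  have hdrop : ∀ ε > 0, ∀ s ∈ Set.Ici T₀, ε ≤ h s →
      E (s + ε / (2 * L)) ≤ E s - (cmin * (ε / 2)) * (ε / (2 * L)) := by
    intro ε hε s hs hsh
    set δ : ℝ := ε / (2 * L) with hδ_def
    have hδ_pos : 0 < δ := by positivity
    have hsub : Set.Icc s (s + δ) ⊆ Set.Ici T₀ := fun t ht => le_trans hs ht.1
    -- h ≥ ε/2 on the interval
    have hhalf : ∀ t ∈ Set.Icc s (s + δ), ε / 2 ≤ h t := by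
      intro t ht
      have hlip : ‖h t - h s‖ ≤ L * ‖t - s‖ := by
        apply Convex.norm_image_sub_le_of_norm_hasDerivWithin_le
          (f' := fun t => ⟪φ' t, ψ t⟫ + ⟪ψ t, φ' t⟫)
          (fun u hu => (hh' u (hIci (hsub hu))).hasDerivWithinAt)
          (fun u hu => hh'_le u (hsub hu)) (convex_Icc _ _)
          (Set.left_mem_Icc.mpr (by linarith)) ht
      rw [Real.norm_eq_abs, Real.norm_eq_abs] at hlip
      have h2 : |t - s| ≤ δ := by
        rw [abs_of_nonneg (by linarith [ht.1])]
        linarith [ht.2]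
      have h3 : |h t - h s| ≤ L * δ := le_trans hlip (by nlinarith)
      have h4 : L * δ = ε / 2 := by
        rw [hδ_def]; field_simp
      have := abs_le.mp h3
      linarith [this.1]
    -- F := E + μ t is antitone on the interval
    set μ : ℝ := cmin * (ε / 2) with hμ_def
    have hμ_pos : 0 < μ := by positivity
    have hFanti : AntitoneOn (fun t => E t + μ * t) (Set.Icc s (s + δ)) := by
      apply antitoneOn_of_deriv_nonpos (convex_Icc _ _)
      · intro t ht
        exact (((hE' t (hIci (hsub ht))).add
          ((hasDerivAt_id t).const_mul μ)).continuousAt).continuousWithinAt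
      · intro t ht
        rw [interior_Icc] at ht
        exact ((hE' t (hIci (hsub (Set.Ioo_subset_Icc_self ht)))).add
          ((hasDerivAt_id t).const_mul μ)).differentiableAt.differentiableWithinAt
      · intro t ht
        rw [interior_Icc] at ht
        have ht' := Set.Ioo_subset_Icc_self ht
        have hF : HasDerivAt (fun t => E t + μ * t) (-(co t * ⟪φ' t, φ' t⟫) + μ * 1) t :=
          (hE' t (hIci (hsub ht'))).add ((hasDerivAt_id t).const_mul μ)
        rw [hF.deriv]
        have h1 : cmin ≤ co t := hco_ge t (hIci (hsub ht'))
        have h2 : ε / 2 ≤ ⟪φ' t, φ' t⟫ := by rw [hnorm_sq]; exact hhalf t ht'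
        have h3 : μ ≤ co t * ⟪φ' t, φ' t⟫ := by
          rw [hμ_def]
          exact mul_le_mul h1 h2 (by linarith) (hco_nonneg t)
        simp only [mul_one]
        linarith
    have := hFanti (Set.left_mem_Icc.mpr (by linarith))
      (Set.right_mem_Icc.mpr (by linarith)) (by linarith)
    simp only at this
    nlinarith
  -- limit of the energy
  set Et : ℝ → ℝ := fun t => E (max t T₀) with hEt_def
  have hEt_anti : Antitone Et := fun s t hst =>
    hEanti (le_max_right s T₀) (le_max_right t T₀) (max_le_max hst le_rfl)
  have hEt_bdd : BddBelow (Set.range Et) := ⟨0, by rintro x ⟨t, rfl⟩; exact (hE_pos _).le⟩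
  obtain ⟨EL, hEt_tend⟩ : ∃ EL, Tendsto Et atTop (nhds EL) :=
    ⟨_, tendsto_atTop_ciInf hEt_anti hEt_bdd⟩
  -- kinetic energy tends to 0
  have hh_tend : Tendsto h atTop (nhds 0) := by
    rw [Metric.tendsto_atTop]
    intro ε hε
    by_contra hcon
    push_neg at hcon
    have hfreq : ∀ k : ℕ, ∃ t, max (k : ℝ) T₀ ≤ t ∧ ε ≤ h t := by
      intro k
      obtain ⟨t, ht1, ht2⟩ := hcon (max (k : ℝ) T₀)
      refine ⟨t, ht1, ?_⟩
      rw [Real.dist_eq, sub_zero, abs_of_nonneg (hh_nonneg t)] at ht2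
      exact ht2
    choose σ hσ1 hσ2 using hfreq
    have hσT₀ : ∀ k, T₀ ≤ σ k := fun k => le_trans (le_max_right _ _) (hσ1 k)
    have hσtop : Tendsto σ atTop atTop :=
      tendsto_atTop_mono (fun k => le_trans (le_max_left _ _) (hσ1 k))
        tendsto_natCast_atTop_atTop
    set δ : ℝ := ε / (2 * L) with hδ_def
    have hδ_pos : 0 < δ := by positivity
    have hdropk : ∀ k, E (σ k + δ) ≤ E (σ k) - (cmin * (ε / 2)) * δ :=
      fun k => hdrop ε hε (σ k) (hσT₀ k) (hσ2 k)
    have hlim1 : Tendsto (fun k => E (σ k)) atTop (nhds EL) := by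
      have h1 : Tendsto (fun k => Et (σ k)) atTop (nhds EL) := hEt_tend.comp hσtop
      have h2 : (fun k => Et (σ k)) = fun k => E (σ k) :=
        funext fun k => by rw [hEt_def]; simp only [max_eq_left (hσT₀ k)]
      rwa [h2] at h1
    have hlim2 : Tendsto (fun k => E (σ k + δ)) atTop (nhds EL) := by
      have h0 : Tendsto (fun k => σ k + δ) atTop atTop := hσtop.atTop_add tendsto_const_nhds
      have h1 : Tendsto (fun k => Et (σ k + δ)) atTop (nhds EL) := hEt_tend.comp h0
      have h2 : (fun k => Et (σ k + δ)) = fun k => E (σ k + δ) :=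
        funext fun k => by
          rw [hEt_def]
          simp only [max_eq_left (le_trans (hσT₀ k) (by linarith : σ k ≤ σ k + δ))]
      rwa [h2] at h1
    have hfin : EL ≤ EL - (cmin * (ε / 2)) * δ :=
      le_of_tendsto_of_tendsto' hlim2 (hlim1.sub_const _) hdropk
    have hpos : 0 < (cmin * (ε / 2)) * δ := by positivity
    linarith only [hfin, hpos]
  -- velocity tends to 0
  have hφ'_tend : Tendsto φ' atTop (nhds 0) := by
    rw [tendsto_zero_iff_norm_tendsto_zero]
    have hrw : (fun t => ‖φ' t‖) = fun t => Real.sqrt (h t) :=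
      funext fun t => (Real.sqrt_sq (norm_nonneg _)).symm
    rw [hrw]
    have h1 := (Real.continuous_sqrt.tendsto 0).comp hh_tend
    rw [← Real.sqrt_zero]
    exact h1
  -- continuity of ψ on (a, ∞)
  have hψ_cont : ∀ t ∈ Set.Ioi a, ContinuousAt ψ t := by
    intro t ht
    have h1 : ContinuousAt φ' t := (heq' t ht).continuousAt
    have h2 : ContinuousAt φ t := (hφ t ht).continuousAt
    have hco_cont : ContinuousAt co t := by
      rw [hco_def]
      apply ContinuousAt.mul continuousAt_const
      apply Real.continuous_sqrt.continuousAt.comp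
      exact ((h1.norm.pow 2)).add (continuousAt_const.mul (hΦd.continuous.continuousAt.comp h2))
    rw [hψ_def]
    exact ((hco_cont.smul h1).neg).sub (gradcont.continuousAt.comp h2)
  -- the main estimate
  have hmain : ∀ ε > 0, ‖gradient Φ m‖ ≤ (Cf + 3) * ε := by
    intro ε hε
    obtain ⟨r, hr_pos, hr⟩ : ∃ r > 0, ∀ x, ‖x - m‖ < r →
        ‖gradient Φ x - gradient Φ m‖ ≤ ε := by
      obtain ⟨r, hr_pos, hr⟩ := Metric.continuousAt_iff.mp (gradcont.continuousAt (x := m)) ε hε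
      refine ⟨r, hr_pos, fun x hx => ?_⟩
      have := hr (x := x) (by rwa [dist_eq_norm])
      rw [dist_eq_norm] at this
      exact this.le
    obtain ⟨T₁, hT₁⟩ : ∃ T₁, ∀ t, T₁ ≤ t → ‖φ' t‖ ≤ min ε (r / 2) := by
      obtain ⟨N, hN⟩ := Metric.tendsto_atTop.mp hφ'_tend (min ε (r / 2))
        (lt_min hε (by positivity))
      refine ⟨N, fun t ht => ?_⟩
      have := hN t ht
      rw [dist_zero_right] at this
      exact this.le
    -- pick a good time s = tn n
    have hev1 : ∀ᶠ n in atTop, max T₁ T₀ ≤ tn n := htop.eventually (eventually_ge_atTop _)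
    have hev2 : ∀ᶠ n in atTop, φ (tn n) ∈ Metric.ball m (r / 2) :=
      hconv (Metric.ball_mem_nhds m (by positivity))
    obtain ⟨n, hn1, hn2⟩ := (hev1.and hev2).exists
    set s : ℝ := tn n with hs_def
    have hsT₀ : T₀ ≤ s := le_trans (le_max_right _ _) hn1
    have hsT₁ : T₁ ≤ s := le_trans (le_max_left _ _) hn1
    have hsa : a < s := htn n
    have hφs : ‖φ s - m‖ < r / 2 := by
      have := Metric.mem_ball.mp hn2
      rwa [dist_eq_norm] at this
    have hsubIoi : Set.Icc s (s + 1) ⊆ Set.Ioi a := fun t ht => lt_of_lt_of_le hsa ht.1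
    have hsubIci : Set.Icc s (s + 1) ⊆ Set.Ici T₀ := fun t ht => le_trans hsT₀ ht.1
    -- position stays near m
    have hpos_close : ∀ t ∈ Set.Icc s (s + 1), ‖φ t - m‖ < r := by
      intro t ht
      have hmv : ‖φ t - φ s‖ ≤ (r / 2) * ‖t - s‖ := by
        apply Convex.norm_image_sub_le_of_norm_hasDerivWithin_le (f' := φ')
          (fun u hu => (hφ u (hsubIoi hu)).hasDerivWithinAt)
          (fun u hu => le_trans (hT₁ u (le_trans hsT₁ hu.1)) (min_le_right _ _))
          (convex_Icc _ _) (Set.left_mem_Icc.mpr (by linarith)) ht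
      have h2 : ‖t - s‖ ≤ 1 := by
        rw [Real.norm_eq_abs, abs_of_nonneg (by linarith [ht.1])]
        linarith [ht.2]
      have h3 : ‖φ t - φ s‖ ≤ r / 2 := le_trans hmv (by nlinarith)
      calc ‖φ t - m‖ ≤ ‖φ t - φ s‖ + ‖φ s - m‖ := norm_sub_le_norm_sub_add_norm_sub _ _ _
        _ < r / 2 + r / 2 := by linarith
        _ = r := by ring
    -- bound on ψ + gradient Φ m on the interval
    have hψg : ∀ t ∈ Set.Icc s (s + 1), ‖ψ t + gradient Φ m‖ ≤ Cf * ε + ε := by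
      intro t ht
      have h1 : ψ t + gradient Φ m = -(co t • φ' t) - (gradient Φ (φ t) - gradient Φ m) := by
        rw [hψ_def]; simp only [sub_eq_add_neg, neg_add, neg_neg, add_assoc]
      rw [h1]
      have h2 : ‖co t • φ' t‖ ≤ Cf * ε := by
        rw [norm_smul, Real.norm_eq_abs, abs_of_nonneg (hco_nonneg t)]
        exact mul_le_mul (hco_le t (hsubIci ht))
          (le_trans (hT₁ t (le_trans hsT₁ ht.1)) (min_le_left _ _)) (norm_nonneg _) hCf_nonneg
      have h3 : ‖gradient Φ (φ t) - gradient Φ m‖ ≤ ε := hr _ (hpos_close t ht)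
      calc ‖-(co t • φ' t) - (gradient Φ (φ t) - gradient Φ m)‖
          ≤ ‖-(co t • φ' t)‖ + ‖gradient Φ (φ t) - gradient Φ m‖ := norm_sub_le _ _
        _ = ‖co t • φ' t‖ + ‖gradient Φ (φ t) - gradient Φ m‖ := by rw [norm_neg]
        _ ≤ Cf * ε + ε := add_le_add h2 h3
    -- fundamental theorem of calculus
    have hint : IntervalIntegrable ψ MeasureTheory.volume s (s + 1) := by
      apply ContinuousOn.intervalIntegrable
      intro t ht
      rw [Set.uIcc_of_le (by linarith : s ≤ s + 1)] at ht
      exact (hψ_cont t (hsubIoi ht)).continuousWithinAt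
    have hFTC : ∫ t in s..(s + 1), ψ t = φ' (s + 1) - φ' s := by
      apply intervalIntegral.integral_eq_sub_of_hasDerivAt
      · intro t ht
        rw [Set.uIcc_of_le (by linarith : s ≤ s + 1)] at ht
        exact heq' t (hsubIoi ht)
      · exact hint
    have hkey : ‖(φ' (s + 1) - φ' s) + gradient Φ m‖ ≤ (Cf + 1) * ε := by
      have h1 : (φ' (s + 1) - φ' s) + gradient Φ m
          = ∫ t in s..(s + 1), (ψ t + gradient Φ m) := by
        rw [intervalIntegral.integral_add hint intervalIntegrable_const, hFTC,
          intervalIntegral.integral_const]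
        norm_num
      rw [h1]
      have h2 := intervalIntegral.norm_integral_le_of_norm_le_const
        (C := Cf * ε + ε) (f := fun t => ψ t + gradient Φ m) (a := s) (b := s + 1) ?_
      · calc ‖∫ t in s..(s + 1), (ψ t + gradient Φ m)‖ ≤ (Cf * ε + ε) * |s + 1 - s| := h2
          _ = (Cf + 1) * ε := by rw [show s + 1 - s = (1:ℝ) by ring, abs_one]; ring
      · intro t ht
        rw [Set.uIoc_of_le (by linarith : s ≤ s + 1)] at ht
        exact hψg t ⟨ht.1.le, ht.2⟩
    have hv1 : ‖φ' (s + 1)‖ ≤ ε := le_trans (hT₁ _ (by linarith)) (min_le_left _ _)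
    have hv2 : ‖φ' s‖ ≤ ε := le_trans (hT₁ _ hsT₁) (min_le_left _ _)
    calc ‖gradient Φ m‖
        = ‖((φ' (s + 1) - φ' s) + gradient Φ m) - φ' (s + 1) + φ' s‖ := by
          congr 1; abel
      _ ≤ ‖((φ' (s + 1) - φ' s) + gradient Φ m) - φ' (s + 1)‖ + ‖φ' s‖ := norm_add_le _ _
      _ ≤ ‖(φ' (s + 1) - φ' s) + gradient Φ m‖ + ‖φ' (s + 1)‖ + ‖φ' s‖ := by
          have := norm_sub_le ((φ' (s + 1) - φ' s) + gradient Φ m) (φ' (s + 1))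
          linarith
      _ ≤ (Cf + 1) * ε + ε + ε := by linarith
      _ = (Cf + 3) * ε := by ring
  -- conclusion
  by_contra hne
  have hg_pos : 0 < ‖gradient Φ m‖ := norm_pos_iff.mpr hne
  have hCf3 : 0 < Cf + 3 := by linarith
  have h1 := hmain (‖gradient Φ m‖ / (2 * (Cf + 3))) (by positivity)
  have h2 : (Cf + 3) * (‖gradient Φ m‖ / (2 * (Cf + 3))) = ‖gradient Φ m‖ / 2 := by
    field_simp
  rw [h2] at h1
  linarith only [h1, hg_pos]
end
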